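/- (Backward error bound in terms of the condition number of V.) Let A be an invertible n×n real matrix, let U, V be n×k real matrices with V of full column rank, set λ = ‖U‖·‖V‖, κ(V) = ‖V‖·‖(VᵀV)⁻¹Vᵀ‖, β = ‖I + Vᵀ A⁻¹ U‖, and B = A + UVᵀ, with B invertible. Let X be an invertible n×n matrix with ‖X − A⁻¹‖ ≤ ε₁ where ε₁ < 1/(2‖A‖); assume I + Vᵀ X U is invertible; and let W be an invertible k×k matrix with ‖W − (I + Vᵀ X U)⁻¹‖ ≤ ε₂ such that W⁻¹ − Vᵀ X U is invertible, ε₂ < 1/(2(β + λ ε₁)), and 2(β + λ ε₁)² ε₂ < 1/2. Then the matrix X − X U W Vᵀ X is invertible and ‖B − (X − X U W Vᵀ X)⁻¹‖ ≤ 2 ε₁ ‖A‖² + 4 λ ε₂ (κ(V)‖A⁻¹B‖ + λ ε₁)². -/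

import Mathlib

/-!
Write `C = 1 + VᵀXU`, `S = W⁻¹ - VᵀXU` and `E = W - C⁻¹`. Multiplying out shows
`(X - XUWVᵀX) (X⁻¹ + U S⁻¹ Vᵀ) = 1`, so with `B = A + UVᵀ` the backward error is
`(A - X⁻¹) - U (S⁻¹ - 1) Vᵀ`. The first term is the perturbation of an inverse:
`A - X⁻¹ = A (X - A⁻¹) X⁻¹` and `‖X⁻¹‖ ≤ 2‖A‖`. For the second, `C W S = 1 - C E VᵀXU` is
within `3/4` of the identity, and `S⁻¹ - 1 = (C W S)⁻¹ C E C` has norm at most `4‖C‖²ε₂`.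
Finally `‖C‖ ≤ β + λε₁`, and `β ≤ κ(V)‖A⁻¹B‖` because `1 + VᵀA⁻¹U = Vᵀ (A⁻¹B) V (VᵀV)⁻¹`.
-/

open Matrix
open scoped Matrix.Norms.L2Operator Ring

section Ring

variable {R : Type*} [Ring R] {t w : R}

theorem one_add_mul_mul_ringInverse_sub (hc : IsUnit (1 + t)) (hw : IsUnit w) :
    (1 + t) * (w * (w⁻¹ʳ - t)) = 1 - (1 + t) * (w - (1 + t)⁻¹ʳ) * t := by
  simp only [mul_sub, sub_mul, Ring.mul_inverse_cancel _ hw, Ring.mul_inverse_cancel _ hc,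
    add_mul, one_mul, mul_one, ← mul_assoc]
  abel

theorem ringInverse_ringInverse_sub_sub_one (hc : IsUnit (1 + t)) (hw : IsUnit w)
    (hs : IsUnit (w⁻¹ʳ - t)) :
    (w⁻¹ʳ - t)⁻¹ʳ - 1 =
      (1 - (1 + t) * (w - (1 + t)⁻¹ʳ) * t)⁻¹ʳ * (1 + t) * (w - (1 + t)⁻¹ʳ) * (1 + t) := by
  have hcws := one_add_mul_mul_ringInverse_sub hc hw
  set c := 1 + t with hc_def
  set e := w - c⁻¹ʳ
  have h1s : 1 - (w⁻¹ʳ - t) = w⁻¹ʳ * e * c := by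
    have := Ring.inverse_sub_inverse (a := w) (b := c⁻¹ʳ) (by simp [hw, hc])
    rw [Ring.inverse_inverse hc] at this
    rw [show e = -(c⁻¹ʳ - w) from (neg_sub _ _).symm, mul_neg, neg_mul, ← this, hc_def]
    abel
  have hsw : (w⁻¹ʳ - t)⁻¹ʳ * w⁻¹ʳ = (1 - c * e * t)⁻¹ʳ * c := by
    rw [eq_comm, Ring.inverse_mul_eq_iff_eq_mul _ _ _ (hcws ▸ hc.mul (hw.mul hs)), ← hcws,
      mul_assoc, mul_assoc, Ring.mul_inverse_cancel_left _ _ hs, Ring.mul_inverse_cancel _ hw,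
      mul_one]
  calc (w⁻¹ʳ - t)⁻¹ʳ - 1 = (w⁻¹ʳ - t)⁻¹ʳ * (1 - (w⁻¹ʳ - t)) := by
        rw [mul_sub, mul_one, Ring.inverse_mul_cancel _ hs]
    _ = _ := by simp only [h1s, ← mul_assoc, hsw]

end Ring

section NormedRing

variable {R : Type*} [NormedRing R]

theorem norm_sub_ringInverse_le {a x : R} {ε : ℝ} (ha : IsUnit a) (hx : IsUnit x)
    (hxa : ‖x - a⁻¹ʳ‖ ≤ ε) (hε : 2 * ‖a‖ * ε ≤ 1) :
    ‖a - x⁻¹ʳ‖ ≤ 2 * ε * ‖a‖ ^ 2 := by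
  have hid : a - x⁻¹ʳ = a * (x - a⁻¹ʳ) * x⁻¹ʳ := by
    simpa only [Ring.inverse_inverse ha] using
      Ring.inverse_sub_inverse (a := a⁻¹ʳ) (b := x) (by simp [ha, hx])
  have hdiff : ‖a - x⁻¹ʳ‖ ≤ ‖a‖ * ε * ‖x⁻¹ʳ‖ :=
    hid ▸ norm_mul₃_le.trans (by gcongr)
  have hxinv : ‖x⁻¹ʳ‖ ≤ 2 * ‖a‖ := by
    have := norm_sub_le a (a - x⁻¹ʳ)
    rw [sub_sub_cancel] at this
    nlinarith [mul_le_mul_of_nonneg_right hε (norm_nonneg x⁻¹ʳ)]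
  calc ‖a - x⁻¹ʳ‖ ≤ ‖a‖ * ε * (2 * ‖a‖) :=
        hdiff.trans (by have := (norm_nonneg _).trans hxa; gcongr)
    _ = 2 * ε * ‖a‖ ^ 2 := by ring

theorem norm_ringInverse_one_sub_le (h1 : ‖(1 : R)‖ ≤ 1) {f : R} (hf : IsUnit (1 - f)) {r : ℝ}
    (hfr : ‖f‖ ≤ r) (hr : r < 1) : ‖(1 - f)⁻¹ʳ‖ ≤ (1 - r)⁻¹ := by
  set u := (1 - f)⁻¹ʳ
  have hu : u = 1 + f * u := by
    rw [← sub_eq_iff_eq_add, ← one_sub_mul, Ring.mul_inverse_cancel _ hf]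
  have : ‖u‖ ≤ 1 + r * ‖u‖ :=
    calc ‖u‖ = ‖1 + f * u‖ := congrArg _ hu
      _ ≤ ‖(1 : R)‖ + ‖f‖ * ‖u‖ := (norm_add_le _ _).trans (add_le_add_right (norm_mul_le _ _) _)
      _ ≤ 1 + r * ‖u‖ := by gcongr
  rw [← one_div, le_div_iff₀ (by linarith)]
  linarith

theorem norm_ringInverse_ringInverse_sub_sub_one_le (h1 : ‖(1 : R)‖ ≤ 1) {t w : R} {ε μ : ℝ}
    (hc : IsUnit (1 + t)) (hw : IsUnit w) (hs : IsUnit (w⁻¹ʳ - t))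
    (hwc : ‖w - (1 + t)⁻¹ʳ‖ ≤ ε) (hcμ : ‖1 + t‖ ≤ μ) (hμε : μ * ε ≤ 1 / 2)
    (hμ2ε : μ ^ 2 * ε ≤ 1 / 4) :
    ‖(w⁻¹ʳ - t)⁻¹ʳ - 1‖ ≤ 4 * μ ^ 2 * ε := by
  rw [ringInverse_ringInverse_sub_sub_one hc hw hs]
  set c := 1 + t
  set e := w - c⁻¹ʳ
  have hε : 0 ≤ ε := (norm_nonneg _).trans hwc
  have hμ : 0 ≤ μ := (norm_nonneg _).trans hcμ
  have ht : ‖t‖ ≤ 1 + μ :=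
    calc ‖t‖ = ‖c - 1‖ := by simp [c]
      _ ≤ 1 + μ := (norm_sub_le _ _).trans (by linarith)
  have hf : ‖c * e * t‖ ≤ 3 / 4 :=
    calc ‖c * e * t‖ ≤ μ * ε * (1 + μ) := norm_mul₃_le.trans (by gcongr)
      _ ≤ 3 / 4 := by nlinarith
  have hfi : ‖(1 - c * e * t)⁻¹ʳ‖ ≤ 4 :=
    (norm_ringInverse_one_sub_le h1 (one_add_mul_mul_ringInverse_sub hc hw ▸ hc.mul (hw.mul hs))
      hf (by norm_num)).trans_eq (by norm_num)
  calc ‖(1 - c * e * t)⁻¹ʳ * c * e * c‖ ≤ 4 * μ * ε * μ :=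
        (norm_mul_le _ _).trans (by gcongr; exact norm_mul₃_le.trans (by gcongr))
    _ = 4 * μ ^ 2 * ε := by ring

end NormedRing

namespace Matrix

variable {l m n p : Type*} [Fintype l] [Fintype m] [Fintype n] [Fintype p]
  [DecidableEq m] [DecidableEq n] [DecidableEq p]

theorem isUnit_sub_mul_mul_mul_mul_and_inv_eq {α : Type*} [CommRing α]
    {X : Matrix n n α} {U : Matrix n m α} {W : Matrix m m α} {V : Matrix m n α}
    (hX : IsUnit X) (hW : IsUnit W) (hS : IsUnit (W⁻¹ - V * X * U)) :
    IsUnit (X - X * U * W * V * X) ∧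
      (X - X * U * W * V * X)⁻¹ = X⁻¹ + U * (W⁻¹ - V * X * U)⁻¹ * V := by
  set S := W⁻¹ - V * X * U
  have hX' := (isUnit_iff_isUnit_det X).mp hX
  have hcancel : S⁻¹ - W - W * (V * X * U) * S⁻¹ = 0 := by
    rw [show V * X * U = W⁻¹ - S by simp [S], mul_sub, sub_mul,
      mul_nonsing_inv _ ((isUnit_iff_isUnit_det W).mp hW), one_mul, mul_assoc,
      mul_nonsing_inv _ ((isUnit_iff_isUnit_det S).mp hS), mul_one]
    abel
  have hYZ : (X - X * U * W * V * X) * (X⁻¹ + U * S⁻¹ * V) = 1 := by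
    calc _ = 1 + X * U * (S⁻¹ - W - W * (V * X * U) * S⁻¹) * V := by
          simp only [Matrix.sub_mul, Matrix.mul_add, Matrix.mul_sub, Matrix.mul_assoc,
            Matrix.mul_one, mul_nonsing_inv _ hX']
          abel
      _ = 1 := by rw [hcancel, Matrix.mul_zero, Matrix.zero_mul, add_zero]
  exact ⟨(isUnit_iff_isUnit_det _).mpr (isUnit_det_of_right_inverse hYZ), inv_eq_right_inv hYZ⟩

variable {𝕜 : Type*} [RCLike 𝕜]

theorem l2_opNorm_one_le : ‖(1 : Matrix n n 𝕜)‖ ≤ 1 := by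
  rw [cstar_norm_def, map_one, ContinuousLinearMap.one_def]
  exact ContinuousLinearMap.norm_id_le

theorem l2_opNorm_mul₃_le (A : Matrix l m 𝕜) (B : Matrix m n 𝕜) (C : Matrix n p 𝕜) :
    ‖A * B * C‖ ≤ ‖A‖ * ‖B‖ * ‖C‖ :=
  (l2_opNorm_mul _ _).trans (by gcongr; exact l2_opNorm_mul _ _)

theorem l2_opNorm_transpose (A : Matrix m n ℝ) : ‖Aᵀ‖ = ‖A‖ := by
  rw [← conjTranspose_eq_transpose_of_trivial, l2_opNorm_conjTranspose]

theorem norm_one_add_mul_mul_le {V : Matrix m n 𝕜} {X Y : Matrix n n 𝕜} {U : Matrix n m 𝕜}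
    {ε : ℝ} (hXY : ‖X - Y‖ ≤ ε) : ‖1 + V * X * U‖ ≤ ‖1 + V * Y * U‖ + ‖U‖ * ‖V‖ * ε :=
  calc ‖1 + V * X * U‖ = ‖(1 + V * Y * U) + V * (X - Y) * U‖ := by
        rw [Matrix.mul_sub, Matrix.sub_mul, add_add_sub_cancel]
    _ ≤ ‖1 + V * Y * U‖ + ‖V‖ * ε * ‖U‖ :=
        (norm_add_le _ _).trans (by gcongr; exact (l2_opNorm_mul₃_le _ _ _).trans (by gcongr))
    _ = ‖1 + V * Y * U‖ + ‖U‖ * ‖V‖ * ε := by ring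

theorem norm_add_mul_sub_add_mul_mul_le (A Y : Matrix n n 𝕜) (U : Matrix n m 𝕜)
    (T : Matrix m m 𝕜) (V : Matrix m n 𝕜) :
    ‖(A + U * V) - (Y + U * T * V)‖ ≤ ‖A - Y‖ + ‖U‖ * ‖V‖ * ‖T - 1‖ :=
  calc ‖(A + U * V) - (Y + U * T * V)‖ = ‖(A - Y) - U * (T - 1) * V‖ := by
        rw [Matrix.mul_sub, Matrix.sub_mul, Matrix.mul_one]
        abel_nf
    _ ≤ ‖A - Y‖ + ‖U‖ * ‖T - 1‖ * ‖V‖ :=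
        (norm_sub_le _ _).trans (by gcongr; exact l2_opNorm_mul₃_le _ _ _)
    _ = ‖A - Y‖ + ‖U‖ * ‖V‖ * ‖T - 1‖ := by ring

theorem norm_one_add_transpose_mul_inv_mul_le
    {A : Matrix n n ℝ} {U V : Matrix n m ℝ} (hA : IsUnit A) (hV : IsUnit (Vᵀ * V)) :
    ‖1 + Vᵀ * A⁻¹ * U‖ ≤ ‖V‖ * ‖(Vᵀ * V)⁻¹ * Vᵀ‖ * ‖A⁻¹ * (A + U * Vᵀ)‖ := by
  have hleft : Vᵀ * (A⁻¹ * (A + U * Vᵀ)) = (1 + Vᵀ * A⁻¹ * U) * Vᵀ := by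
    simp only [Matrix.mul_add, Matrix.add_mul, Matrix.one_mul, Matrix.mul_assoc,
      nonsing_inv_mul _ ((isUnit_iff_isUnit_det A).mp hA), Matrix.mul_one]
  have hid : 1 + Vᵀ * A⁻¹ * U = Vᵀ * (A⁻¹ * (A + U * Vᵀ)) * ((Vᵀ * V)⁻¹ * Vᵀ)ᵀ := by
    rw [transpose_mul, transpose_transpose, transpose_nonsing_inv, transpose_mul,
      transpose_transpose, hleft, Matrix.mul_assoc (1 + _), ← Matrix.mul_assoc Vᵀ,
      mul_nonsing_inv _ ((isUnit_iff_isUnit_det _).mp hV), Matrix.mul_one]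
  calc ‖1 + Vᵀ * A⁻¹ * U‖ ≤ ‖Vᵀ‖ * ‖A⁻¹ * (A + U * Vᵀ)‖ * ‖((Vᵀ * V)⁻¹ * Vᵀ)ᵀ‖ :=
        hid ▸ l2_opNorm_mul₃_le _ _ _
    _ = _ := by rw [l2_opNorm_transpose, l2_opNorm_transpose]; ring

end Matrix

theorem smw_backward_error_cond_number_general {n k : ℕ}
    (A : Matrix (Fin n) (Fin n) ℝ) (hA : IsUnit A)
    (U V : Matrix (Fin n) (Fin k) ℝ) (hV : IsUnit (Vᵀ * V))
    (lam : ℝ) (hlam : lam = ‖U‖ * ‖V‖)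
    (κV : ℝ) (hκV : κV = ‖V‖ * ‖(Vᵀ * V)⁻¹ * Vᵀ‖)
    (β : ℝ) (hβ : β = ‖(1 : Matrix (Fin k) (Fin k) ℝ) + Vᵀ * A⁻¹ * U‖)
    (B : Matrix (Fin n) (Fin n) ℝ) (hB : B = A + U * Vᵀ)
    (X : Matrix (Fin n) (Fin n) ℝ) (hX : IsUnit X) (ε₁ ε₂ : ℝ)
    (hXA : ‖X - A⁻¹‖ ≤ ε₁) (hε₁ : ε₁ < 1 / (2 * ‖A‖))
    (hcapX : IsUnit ((1 : Matrix (Fin k) (Fin k) ℝ) + Vᵀ * X * U))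
    (W : Matrix (Fin k) (Fin k) ℝ) (hW : IsUnit W)
    (hWcap : ‖W - ((1 : Matrix (Fin k) (Fin k) ℝ) + Vᵀ * X * U)⁻¹‖ ≤ ε₂)
    (hWinv : IsUnit (W⁻¹ - Vᵀ * X * U))
    (hε₂ : ε₂ < 1 / (2 * (β + lam * ε₁)))
    (hε₂' : 2 * (β + lam * ε₁) ^ 2 * ε₂ < 1 / 2) :
    IsUnit (X - X * U * W * Vᵀ * X) ∧
      ‖B - (X - X * U * W * Vᵀ * X)⁻¹‖ ≤
        2 * ε₁ * ‖A‖ ^ 2 + 4 * lam * ε₂ * (κV * ‖A⁻¹ * B‖ + lam * ε₁) ^ 2 := by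
  obtain ⟨hY, hYinv⟩ := isUnit_sub_mul_mul_mul_mul_and_inv_eq hX hW hWinv
  refine ⟨hY, ?_⟩
  set μ := β + lam * ε₁
  have hlam0 : 0 ≤ lam := hlam ▸ by positivity
  have hε₂0 : 0 ≤ ε₂ := (norm_nonneg _).trans hWcap
  have hAX : ‖A - X⁻¹‖ ≤ 2 * ε₁ * ‖A‖ ^ 2 := by
    rw [nonsing_inv_eq_ringInverse] at hXA ⊢
    exact norm_sub_ringInverse_le hA hX hXA
      (by linarith [mul_le_of_le_div₀ zero_le_one (by positivity) hε₁.le])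
  have hC : ‖1 + Vᵀ * X * U‖ ≤ μ := by
    simpa only [← hβ, l2_opNorm_transpose, ← hlam] using
      norm_one_add_mul_mul_le (V := Vᵀ) (U := U) hXA
  have hμ : 0 ≤ μ := (norm_nonneg _).trans hC
  have hS : ‖(W⁻¹ - Vᵀ * X * U)⁻¹ - 1‖ ≤ 4 * μ ^ 2 * ε₂ := by
    simp only [nonsing_inv_eq_ringInverse] at hWcap hWinv ⊢
    exact norm_ringInverse_ringInverse_sub_sub_one_le l2_opNorm_one_le hcapX hW hWinv hWcap hC
      (by linarith [mul_le_of_le_div₀ zero_le_one (by positivity) hε₂.le]) (by linarith)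
  have hμκ : μ ≤ κV * ‖A⁻¹ * B‖ + lam * ε₁ := by
    have := norm_one_add_transpose_mul_inv_mul_le (U := U) hA hV
    rw [← hβ, ← hκV, ← hB] at this
    linarith
  calc ‖B - (X - X * U * W * Vᵀ * X)⁻¹‖
      ≤ ‖A - X⁻¹‖ + lam * ‖(W⁻¹ - Vᵀ * X * U)⁻¹ - 1‖ := by
        rw [hYinv, hB, hlam, ← l2_opNorm_transpose V]
        exact norm_add_mul_sub_add_mul_mul_le _ _ _ _ _
    _ ≤ 2 * ε₁ * ‖A‖ ^ 2 + lam * (4 * μ ^ 2 * ε₂) := by gcongr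
    _ ≤ _ := by
        nlinarith [mul_le_mul_of_nonneg_left (pow_le_pow_left₀ hμ hμκ 2) (mul_nonneg hlam0 hε₂0)]

/-- Backward error bound in terms of the condition number κ(V) = ‖V‖·‖(VᵀV)⁻¹Vᵀ‖. -/
theorem smw_backward_error_cond_number {n k : ℕ}
    (A : Matrix (Fin n) (Fin n) ℝ) (hA : IsUnit A)
    (U V : Matrix (Fin n) (Fin k) ℝ) (hV : IsUnit (Vᵀ * V))
    (lam : ℝ) (hlam : lam = ‖U‖ * ‖V‖)
    (κV : ℝ) (hκV : κV = ‖V‖ * ‖(Vᵀ * V)⁻¹ * Vᵀ‖)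
    (β : ℝ) (hβ : β = ‖(1 : Matrix (Fin k) (Fin k) ℝ) + Vᵀ * A⁻¹ * U‖)
    (B : Matrix (Fin n) (Fin n) ℝ) (hB : B = A + U * Vᵀ) (hBinv : IsUnit B)
    (X : Matrix (Fin n) (Fin n) ℝ) (hX : IsUnit X) (ε₁ ε₂ : ℝ)
    (hXA : ‖X - A⁻¹‖ ≤ ε₁) (hε₁ : ε₁ < 1 / (2 * ‖A‖))
    (hcapX : IsUnit ((1 : Matrix (Fin k) (Fin k) ℝ) + Vᵀ * X * U))
    (W : Matrix (Fin k) (Fin k) ℝ) (hW : IsUnit W)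
    (hWcap : ‖W - ((1 : Matrix (Fin k) (Fin k) ℝ) + Vᵀ * X * U)⁻¹‖ ≤ ε₂)
    (hWinv : IsUnit (W⁻¹ - Vᵀ * X * U))
    (hε₂ : ε₂ < 1 / (2 * (β + lam * ε₁)))
    (hε₂' : 2 * (β + lam * ε₁) ^ 2 * ε₂ < 1 / 2) :
    IsUnit (X - X * U * W * Vᵀ * X) ∧
      ‖B - (X - X * U * W * Vᵀ * X)⁻¹‖ ≤
        2 * ε₁ * ‖A‖ ^ 2 + 4 * lam * ε₂ * (κV * ‖A⁻¹ * B‖ + lam * ε₁) ^ 2 :=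
  smw_backward_error_cond_number_general A hA U V hV lam hlam κV hκV β hβ B hB X hX ε₁ ε₂ hXA hε₁
    hcapX W hW hWcap hWinv hε₂ hε₂'
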